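/- Let Φ: Ω → R³ be a smooth immersion with Gauss map N, and suppose w admits the Hodge decomposition w = dL' + *dL, and -dΦ×H - (*dΦ)×L = dR' + *dR, -⟨*dΦ, L⟩ = dS' + *dS. Then the pointwise identities ⟨dR' + *dR, N⟩ = -*dS' + dS and (dR' + *dR)×N = *dR' - dR - N(dS' + *dS) hold. -/

import Mathlib

/-!
STATEMENT 18: Let Φ : Ω → ℝ³ be a conformal immersion with Gauss map N, mean curvature H,
and suppose (Hodge decompositions, in conformal coordinates where the Hodge star on
1-forms is *(a dx + b dy) = -b dx + a dy):
  w = dL' + *dL,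
  -dΦ×H - (*dΦ)×L = dR' + *dR,
  -⟨*dΦ, L⟩ = dS' + *dS,
where w = ∇H - 2(∇H)^⊤ - |H|²dΦ. Then pointwise
  ⟨dR' + *dR, N⟩ = -*dS' + dS   and
  (dR' + *dR)×N = *dR' - dR - N(dS' + *dS).
-/

open Matrix

noncomputable section

/-- partial derivative in direction `i` -/
noncomputable def pd {F : Type*} [NormedAddCommGroup F] [NormedSpace ℝ F]
    (i : Fin 2) (f : (Fin 2 → ℝ) → F) (x : Fin 2 → ℝ) : F :=
  fderiv ℝ f x (Pi.single i 1)

/-- the Hodge star on 1-forms (componentwise): (*df)_μ -/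
noncomputable def stard {F : Type*} [NormedAddCommGroup F] [NormedSpace ℝ F]
    (f : (Fin 2 → ℝ) → F) (μ : Fin 2) (x : Fin 2 → ℝ) : F :=
  if μ = 0 then -pd 1 f x else pd 0 f x

/-- Euclidean dot product on ℝ³ -/
def dot3 (v w : Fin 3 → ℝ) : ℝ := ∑ i, v i * w i

/-- tangential projection for a conformal immersion -/
noncomputable def tangP (Φ : (Fin 2 → ℝ) → (Fin 3 → ℝ)) (lam : (Fin 2 → ℝ) → ℝ)
    (x : Fin 2 → ℝ) (v : Fin 3 → ℝ) : Fin 3 → ℝ :=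
  Real.exp (-(2 * lam x)) • ∑ ν : Fin 2, dot3 v (pd ν Φ x) • pd ν Φ x



lemma cross_cross' (a b c : Fin 3 → ℝ) :
    (a ⨯₃ b) ⨯₃ c = (a ⬝ᵥ c) • b - (b ⬝ᵥ c) • a := by
  funext i
  fin_cases i <;>
    simp [cross_apply, dotProduct, Fin.sum_univ_three] <;> ring

lemma span3 {u v n : Fin 3 → ℝ} {e : ℝ} (he : e ≠ 0) (hcr : u ⨯₃ v = e • n)
    (hnn : n ⬝ᵥ n = 1) {w : Fin 3 → ℝ}
    (hwu : u ⬝ᵥ w = 0) (hwv : v ⬝ᵥ w = 0) (hwn : n ⬝ᵥ w = 0) : w = 0 := by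
  have h1 : (u ⨯₃ v) ⨯₃ w = 0 := by
    rw [cross_cross', hwu, hwv]; simp
  rw [hcr, LinearMap.map_smul₂, smul_eq_zero] at h1
  have h2 : n ⨯₃ w = 0 := h1.resolve_left he
  have h3 := cross_cross' n w n
  rw [h2, hnn, dotProduct_comm w n, hwn] at h3
  simpa using h3.symm

lemma frame_cross {u v n : Fin 3 → ℝ} {e : ℝ} (he : e ≠ 0)
    (huu : u ⬝ᵥ u = e) (hvv : v ⬝ᵥ v = e) (huv : u ⬝ᵥ v = 0)
    (hnn : n ⬝ᵥ n = 1) (hnu : n ⬝ᵥ u = 0) (hnv : n ⬝ᵥ v = 0)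
    (hcr : u ⨯₃ v = e • n) (l : Fin 3 → ℝ) :
    u ⨯₃ l = (l ⬝ᵥ v) • n - (l ⬝ᵥ n) • v ∧
    v ⨯₃ l = (l ⬝ᵥ n) • u - (l ⬝ᵥ u) • n := by
  have hncu : n ⨯₃ u = v := by
    apply smul_right_injective (Fin 3 → ℝ) he
    show e • (n ⨯₃ u) = e • v
    rw [← LinearMap.map_smul₂, ← hcr, cross_cross', huu, dotProduct_comm v u, huv]
    simp
  have hncv : n ⨯₃ v = -u := by
    apply smul_right_injective (Fin 3 → ℝ) he
    show e • (n ⨯₃ v) = e • (-u)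
    rw [← LinearMap.map_smul₂, ← hcr, cross_cross', hvv, huv]
    simp
  have t1 : v ⬝ᵥ (u ⨯₃ l) = -(e * (l ⬝ᵥ n)) := by
    rw [triple_product_permutation v u l, triple_product_permutation u l v,
      ← cross_anticomm u v, hcr]
    simp [dotProduct_smul]
  have t2 : n ⬝ᵥ (u ⨯₃ l) = l ⬝ᵥ v := by
    rw [triple_product_permutation n u l, triple_product_permutation u l n, hncu]
  have t3 : u ⬝ᵥ (v ⨯₃ l) = e * (l ⬝ᵥ n) := by
    rw [triple_product_permutation u v l, triple_product_permutation v l u,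
      hcr]
    simp [dotProduct_smul]
  have t4 : n ⬝ᵥ (v ⨯₃ l) = -(l ⬝ᵥ u) := by
    rw [triple_product_permutation n v l, triple_product_permutation v l n, hncv]
    simp
  have hun : u ⬝ᵥ n = 0 := by rw [dotProduct_comm]; exact hnu
  have hvn : v ⬝ᵥ n = 0 := by rw [dotProduct_comm]; exact hnv
  have hvu : v ⬝ᵥ u = 0 := by rw [dotProduct_comm]; exact huv
  constructor
  · have hw : u ⨯₃ l - ((l ⬝ᵥ v) • n - (l ⬝ᵥ n) • v) = 0 := by
      apply span3 he hcr hnn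
      · simp only [dotProduct_sub, dotProduct_smul, smul_eq_mul, dot_self_cross, t1, t2, t3, t4, hun, hvn, huv, hvu, hnn, hnu, hnv, huu, hvv]; ring
      · simp only [dotProduct_sub, dotProduct_smul, smul_eq_mul, dot_self_cross, t1, t2, t3, t4, hun, hvn, huv, hvu, hnn, hnu, hnv, huu, hvv]; ring
      · simp only [dotProduct_sub, dotProduct_smul, smul_eq_mul, dot_self_cross, t1, t2, t3, t4, hun, hvn, huv, hvu, hnn, hnu, hnv, huu, hvv]; ring
    exact sub_eq_zero.mp hw
  · have hw : v ⨯₃ l - ((l ⬝ᵥ n) • u - (l ⬝ᵥ u) • n) = 0 := by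
      apply span3 he hcr hnn
      · simp only [dotProduct_sub, dotProduct_smul, smul_eq_mul, dot_self_cross, t1, t2, t3, t4, hun, hvn, huv, hvu, hnn, hnu, hnv, huu, hvv]; ring
      · simp only [dotProduct_sub, dotProduct_smul, smul_eq_mul, dot_self_cross, t1, t2, t3, t4, hun, hvn, huv, hvu, hnn, hnu, hnv, huu, hvv]; ring
      · simp only [dotProduct_sub, dotProduct_smul, smul_eq_mul, dot_self_cross, t1, t2, t3, t4, hun, hvn, huv, hvu, hnn, hnu, hnv, huu, hvv]; ring
    exact sub_eq_zero.mp hw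

lemma stard_zero {F : Type*} [NormedAddCommGroup F] [NormedSpace ℝ F]
    (f : (Fin 2 → ℝ) → F) (x : Fin 2 → ℝ) : stard f 0 x = -pd 1 f x := rfl

lemma stard_one {F : Type*} [NormedAddCommGroup F] [NormedSpace ℝ F]
    (f : (Fin 2 → ℝ) → F) (x : Fin 2 → ℝ) : stard f 1 x = pd 0 f x := rfl

theorem stmt18 (Ω : Set (Fin 2 → ℝ)) (hΩ : IsOpen Ω)
    (Φ H N L' L R' R : (Fin 2 → ℝ) → (Fin 3 → ℝ))
    (S' S : (Fin 2 → ℝ) → ℝ) (lam : (Fin 2 → ℝ) → ℝ)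
    (hΦ : ContDiffOn ℝ (⊤ : ℕ∞) Φ Ω) (hH : ContDiffOn ℝ (⊤ : ℕ∞) H Ω) (hlam : ContDiffOn ℝ (⊤ : ℕ∞) lam Ω)
    (hconf : ∀ x ∈ Ω, ∀ μ ν : Fin 2,
      dot3 (pd μ Φ x) (pd ν Φ x) = if μ = ν then Real.exp (2 * lam x) else 0)
    (hNunit : ∀ x ∈ Ω, dot3 (N x) (N x) = 1)
    (hNorient : ∀ x ∈ Ω, crossProduct (pd 0 Φ x) (pd 1 Φ x) = Real.exp (2 * lam x) • N x)
    (hmean : ∀ x ∈ Ω, (∑ μ : Fin 2, pd μ (pd μ Φ) x) = (2 * Real.exp (2 * lam x)) • H x)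
    (hHnormal : ∀ x ∈ Ω, ∀ μ : Fin 2, dot3 (H x) (pd μ Φ x) = 0)
    (hHodgeW : ∀ x ∈ Ω, ∀ μ : Fin 2,
      pd μ H x - (2:ℝ) • tangP Φ lam x (pd μ H x) - dot3 (H x) (H x) • pd μ Φ x
        = pd μ L' x + stard L μ x)
    (hHodgeR : ∀ x ∈ Ω, ∀ μ : Fin 2,
      -(crossProduct (pd μ Φ x) (H x)) - crossProduct (stard Φ μ x) (L x)
        = pd μ R' x + stard R μ x)
    (hHodgeS : ∀ x ∈ Ω, ∀ μ : Fin 2,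
      -(dot3 (stard Φ μ x) (L x)) = pd μ S' x + stard S μ x) :
    ∀ x ∈ Ω, ∀ μ : Fin 2,
      dot3 (pd μ R' x + stard R μ x) (N x) = -(stard S' μ x) + pd μ S x ∧
      crossProduct (pd μ R' x + stard R μ x) (N x)
        = stard R' μ x - pd μ R x - (pd μ S' x + stard S μ x) • N x := by
  intro x hx μ
  have dot3_eq : ∀ a b : Fin 3 → ℝ, dot3 a b = a ⬝ᵥ b := fun a b => rfl
  set u := pd 0 Φ x with hu
  set v := pd 1 Φ x with hv
  set n := N x with hn
  set h := H x with hh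
  set l := L x with hl
  set e := Real.exp (2 * lam x) with hedef
  have he : e ≠ 0 := Real.exp_ne_zero _
  have huu : u ⬝ᵥ u = e := by have := hconf x hx 0 0; simpa [dot3_eq] using this
  have hvv : v ⬝ᵥ v = e := by have := hconf x hx 1 1; simpa [dot3_eq] using this
  have huv : u ⬝ᵥ v = 0 := by have := hconf x hx 0 1; simpa [dot3_eq] using this
  have hnn : n ⬝ᵥ n = 1 := hNunit x hx
  have hcr : u ⨯₃ v = e • n := hNorient x hx
  have hhu : h ⬝ᵥ u = 0 := hHnormal x hx 0
  have hhv : h ⬝ᵥ v = 0 := hHnormal x hx 1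
  have hnu : n ⬝ᵥ u = 0 := by
    have h0 : u ⬝ᵥ (e • n) = 0 := by rw [← hcr]; exact dot_self_cross u v
    rw [dotProduct_smul, smul_eq_mul, mul_eq_zero] at h0
    rw [dotProduct_comm]; exact h0.resolve_left he
  have hnv : n ⬝ᵥ v = 0 := by
    have h0 : v ⬝ᵥ (e • n) = 0 := by rw [← hcr]; exact dot_cross_self u v
    rw [dotProduct_smul, smul_eq_mul, mul_eq_zero] at h0
    rw [dotProduct_comm]; exact h0.resolve_left he
  have hun : u ⬝ᵥ n = 0 := by rw [dotProduct_comm]; exact hnu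
  have hvn : v ⬝ᵥ n = 0 := by rw [dotProduct_comm]; exact hnv
  have hlv' : v ⬝ᵥ l = l ⬝ᵥ v := dotProduct_comm _ _
  have hlu' : u ⬝ᵥ l = l ⬝ᵥ u := dotProduct_comm _ _
  obtain ⟨hul, hvl⟩ := frame_cross he huu hvv huv hnn hnu hnv hcr l
  obtain ⟨huh, hvh⟩ := frame_cross he huu hvv huv hnn hnu hnv hcr h
  obtain ⟨hunn, hvnn⟩ := frame_cross he huu hvv huv hnn hnu hnv hcr n
  have hun' : u ⨯₃ n = -v := by rw [hunn, hnv, hnn]; module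
  have hvn' : v ⨯₃ n = u := by rw [hvnn, hnn, hnu]; module
  have sΦ0 : stard Φ 0 x = -v := by rw [stard_zero]
  have sΦ1 : stard Φ 1 x = u := by rw [stard_one]
  have hA0 : pd 0 R' x + stard R 0 x = -(u ⨯₃ h) + v ⨯₃ l := by
    rw [← hHodgeR x hx 0, sΦ0, LinearMap.map_neg₂]
    module
  have hA1 : pd 1 R' x + stard R 1 x = -(v ⨯₃ h) - u ⨯₃ l := by
    rw [← hHodgeR x hx 1, sΦ1]
  have hS0 : pd 0 S' x + stard S 0 x = v ⬝ᵥ l := by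
    rw [← hHodgeS x hx 0, sΦ0, dot3_eq, neg_dotProduct]
    ring
  have hS1 : pd 1 S' x + stard S 1 x = -(u ⬝ᵥ l) := by
    rw [← hHodgeS x hx 1, sΦ1, dot3_eq]
  have key10 : (-(u ⨯₃ h) + v ⨯₃ l) ⬝ᵥ n = -(u ⬝ᵥ l) := by
    rw [huh, hvl]
    simp only [add_dotProduct, sub_dotProduct, neg_dotProduct, smul_dotProduct,
      smul_eq_mul, hun, hvn, hnn, hhv, hlu']
    ring
  have key11 : (-(v ⨯₃ h) - u ⨯₃ l) ⬝ᵥ n = -(v ⬝ᵥ l) := by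
    rw [hvh, hul]
    simp only [add_dotProduct, sub_dotProduct, neg_dotProduct, smul_dotProduct,
      smul_eq_mul, hun, hvn, hnn, hhu, hlv']
    ring
  have key20 : (-(u ⨯₃ h) + v ⨯₃ l) ⨯₃ n = (v ⨯₃ h + u ⨯₃ l) - (v ⬝ᵥ l) • n := by
    rw [huh, hvh, hul, hvl]
    simp only [LinearMap.map_add₂, LinearMap.map_sub₂, LinearMap.map_neg₂,
      LinearMap.map_smul₂, hun', hvn', cross_self, hhv, hhu, hlv', hlu']
    module
  have key21 : (-(v ⨯₃ h) - u ⨯₃ l) ⨯₃ n = (-(u ⨯₃ h) + v ⨯₃ l) + (u ⬝ᵥ l) • n := by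
    rw [huh, hvh, hul, hvl]
    simp only [LinearMap.map_add₂, LinearMap.map_sub₂, LinearMap.map_neg₂,
      LinearMap.map_smul₂, hun', hvn', cross_self, hhv, hhu, hlv', hlu']
    module
  rcases (by decide : ∀ ν : Fin 2, ν = 0 ∨ ν = 1) μ with rfl | rfl
  · constructor
    · rw [dot3_eq, hA0, key10, stard_zero, ← stard_one S x]
      linarith [hS1]
    · rw [hA0, hS0, key20, stard_zero, ← stard_one R x]
      linear_combination (norm := module) hA1
  · constructor
    · rw [dot3_eq, hA1, key11, stard_one]
      linarith [hS0, stard_zero S x]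
    · have hR0' : pd 1 R x = -stard R 0 x := by rw [stard_zero, neg_neg]
      rw [hA1, hS1, key21, stard_one]
      linear_combination (norm := module) (-1 : ℝ) • hA0 + hR0'
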